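/- Let {(u,p(u)), (v,p(v)), (w,p(w))} be a 3-edge cut of a 3-edge-connected graph G consisting of three tree-edges of a DFS tree T, and suppose w has the smallest preorder number among u, v, w. Then w is an ancestor of both u and v in T. -/

import Mathlib

variable {V E : Type}

/-- Reachability in the multigraph with edge-endpoint map `ends`,
avoiding (i.e. after deleting) the edges in `S`. -/
def Reach (ends : E → V × V) (S : Set E) : V → V → Prop :=
  Relation.ReflTransGen (fun a b => ∃ e, e ∉ S ∧ (ends e = (a, b) ∨ ends e = (b, a)))

/-- The multigraph is connected. -/
def Connected (ends : E → V × V) : Prop := ∀ u v : V, Reach ends ∅ u v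

/-- `u` and `v` are `k`-edge-connected: no set of at most `k - 1` edges separates them. -/
def KConn (ends : E → V × V) (k : ℕ) (u v : V) : Prop :=
  ∀ S : Finset E, S.card ≤ k - 1 → Reach ends (↑S) u v

/-- The multigraph is `k`-edge-connected: no edge cut of size less than `k`. -/
def GraphKConn (ends : E → V × V) (k : ℕ) : Prop :=
  ∀ S : Finset E, S.card < k → ∀ u v : V, Reach ends (↑S) u v

/-- `S` is an edge cut: removing it disconnects the graph. -/
def IsCutSet (ends : E → V × V) (S : Set E) : Prop :=
  ∃ u v : V, ¬ Reach ends S u v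

/-- A (candidate) DFS tree on the multigraph `ends : E → V × V`: a root, a parent
function, a choice of a tree edge for each non-root vertex, and a preorder numbering. -/
structure DFSTree (V E : Type) where
  ends : E → V × V
  root : V
  parent : V → V
  treeEdge : V → E
  pre : V → ℕ

namespace DFSTree

variable (t : DFSTree V E)

/-- `t.Anc a b` : `a` is an ancestor of `b` (every vertex is an ancestor of itself). -/
def Anc (a b : V) : Prop :=
  Relation.ReflTransGen (fun x y => x ≠ t.root ∧ y = t.parent x) b a

/-- `a` is a proper ancestor of `b`. -/
def ProperAnc (a b : V) : Prop := t.Anc a b ∧ a ≠ b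

def IsTreeEdge (e : E) : Prop := ∃ v, v ≠ t.root ∧ e = t.treeEdge v

/-- The set `B(v)`: back-edges `(x, y)` with `x` a descendant of `v` and `y` a
proper ancestor of `v`. -/
def B (v : V) : Set E :=
  {e | ¬ t.IsTreeEdge e ∧ t.Anc v (t.ends e).1 ∧ t.ProperAnc (t.ends e).2 v}

/-- `m` is the nearest common ancestor of the set `S` of vertices. -/
def IsNCA (S : Set V) (m : V) : Prop :=
  (∀ x ∈ S, t.Anc m x) ∧ ∀ m' : V, (∀ x ∈ S, t.Anc m' x) → t.Anc m' m

/-- `m = M(v)`: the nearest common ancestor of all lower ends of back-edges in `B(v)`. -/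
def IsM (v m : V) : Prop := t.IsNCA {x | ∃ e ∈ t.B v, (t.ends e).1 = x} m

/-- `h = high(v)`: the highest (in preorder) upper end of a back-edge in `B(v)`. -/
def IsHigh (v h : V) : Prop :=
  (∃ e ∈ t.B v, (t.ends e).2 = h) ∧ ∀ e ∈ t.B v, t.pre (t.ends e).2 ≤ t.pre h

/-- `l = low(v)`: the lowest (in preorder) upper end of a back-edge in `B(v)`. -/
def IsLow (v l : V) : Prop :=
  (∃ e ∈ t.B v, (t.ends e).2 = l) ∧ ∀ e ∈ t.B v, t.pre l ≤ t.pre (t.ends e).2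

/-- `v` and `w` have the same `M`-value. -/
def SameM (v w : V) : Prop := ∃ m, t.IsM v m ∧ t.IsM w m

/-- `n = nextM(v)`: the greatest vertex smaller than `v` with the same `M`-value. -/
def IsNextM (v n : V) : Prop :=
  t.pre n < t.pre v ∧ t.SameM v n ∧
    ∀ z, t.pre z < t.pre v → t.SameM v z → t.pre z ≤ t.pre n

/-- `l = lastM(v)`: the smallest vertex with the same `M`-value as `v`. -/
def IsLastM (v l : V) : Prop :=
  t.SameM v l ∧ ∀ z, t.SameM v z → t.pre l ≤ t.pre z

/-- `t` really is a DFS spanning tree of the connected multigraph `ends`. -/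
structure IsDFS : Prop where
  conn : Connected t.ends
  parent_root : t.parent t.root = t.root
  tree_ends : ∀ v, v ≠ t.root → t.ends (t.treeEdge v) = (v, t.parent v)
  treeEdge_inj : ∀ v w, v ≠ t.root → w ≠ t.root → t.treeEdge v = t.treeEdge w → v = w
  back : ∀ e, ¬ t.IsTreeEdge e → t.Anc (t.ends e).2 (t.ends e).1
  pre_inj : Function.Injective t.pre
  pre_mono : ∀ a b, t.Anc a b → t.pre a ≤ t.pre b
  pre_interval : ∀ a b : V,
    t.pre a ≤ t.pre b → t.pre b < t.pre a + {x | t.Anc a x}.ncard → t.Anc a b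

end DFSTree

/-!
Delete the three tree edges and colour each vertex by whether it is still reachable from the
root. Since a 3-edge-connected graph has no cut with fewer edges, the cut is minimal, so each
deleted edge `(x, p(x))` joins the two colours; every other tree edge keeps its colour. Walking
down from the root, a vertex `z` is therefore reachable iff an even number of `u, v, w` are
ancestors of `z`. A back edge `(d, y)` of `B(x)`, for `x ∈ {u, v, w}`, survives the deletion, so
`d` and `y` have equal parity; as `x` is an ancestor of `d` but not of `y`, so is a second cut
vertex, and two ancestors of `d` are comparable. Comparability of each of `u, v, w` with another
one, together with `w` coming first in preorder, forces `w` to be an ancestor of both others.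
-/

open scoped Finset

section Reach

variable {ends : E → V × V} {S : Set E}

theorem Reach.symm {a b : V} (h : Reach ends S a b) : Reach ends S b a := by
  induction h with
  | refl => exact .refl
  | tail _ hstep ih =>
    obtain ⟨e, he, hor⟩ := hstep
    exact Relation.ReflTransGen.head ⟨e, he, hor.symm⟩ ih

theorem Reach.tail_edge {a b c : V} (h : Reach ends S a b) {e : E} (he : e ∉ S)
    (hor : ends e = (b, c) ∨ ends e = (c, b)) : Reach ends S a c :=
  Relation.ReflTransGen.tail h ⟨e, he, hor⟩

theorem reach_iff_of_notMem {r a b : V} {e : E} (he : e ∉ S) (hab : ends e = (a, b)) :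
    Reach ends S r a ↔ Reach ends S r b :=
  ⟨fun h => h.tail_edge he (.inl hab), fun h => h.tail_edge he (.inr hab)⟩

theorem Reach.exists_crossing {D : Set V} {a b : V} (h : Reach ends S a b) (ha : a ∈ D)
    (hb : b ∉ D) : ∃ e p q, e ∉ S ∧ (ends e = (p, q) ∨ ends e = (q, p)) ∧ p ∈ D ∧ q ∉ D := by
  induction h with
  | refl => exact absurd ha hb
  | @tail c d _ hcd ih =>
    by_cases hc : c ∈ D
    · obtain ⟨e, he, hor⟩ := hcd
      exact ⟨e, c, d, he, hor, hc, hb⟩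
    · exact ih hc

def IsMinimalCut (ends : E → V × V) (S : Set E) : Prop :=
  IsCutSet ends S ∧ ∀ e ∈ S, ∀ a b, Reach ends (S \ {e}) a b

theorem IsMinimalCut.reach_iff_not_reach (hS : IsMinimalCut ends S) {e : E} (he : e ∈ S)
    {a b : V} (hab : ends e = (a, b)) (r : V) : Reach ends S r a ↔ ¬ Reach ends S r b := by
  refine (_root_.not_iff.mp fun hiff => ?_).not_right
  have hall : ∀ z, Reach ends S r z := by
    intro z
    by_contra hz
    obtain ⟨f, p, q, hf, hor, hp, hq⟩ :=
      (hS.2 e he r z).exists_crossing (D := {z | Reach ends S r z}) .refl hz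
    by_cases hfe : f = e
    · subst hfe
      rcases hor with h | h <;> rw [hab, Prod.mk.injEq] at h <;> obtain ⟨rfl, rfl⟩ := h
      exacts [hq (hiff.1 hp), hq (hiff.2 hp)]
    · exact hq (Reach.tail_edge hp (fun hfS => hf ⟨hfS, hfe⟩) hor)
  obtain ⟨a', b', hab'⟩ := hS.1
  exact hab' ((hall a').symm.trans (hall b'))

theorem GraphKConn.mono {k l : ℕ} (h : GraphKConn ends l) (hkl : k ≤ l) : GraphKConn ends k :=
  fun S hS => h S (hS.trans_le hkl)

theorem GraphKConn.isMinimalCut {k : ℕ} (hk : GraphKConn ends k) {S : Finset E} (hcard : #S ≤ k)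
    (hcut : IsCutSet ends ↑S) : IsMinimalCut ends ↑S := by
  classical
  refine ⟨hcut, fun e he a b => ?_⟩
  have hlt : #(S.erase e) < k := by
    rw [Finset.card_erase_of_mem he]
    have := Finset.card_pos.2 ⟨e, he⟩
    omega
  simpa using hk (S.erase e) hlt a b

end Reach

theorem Finset.exists_ne_mem_sdiff_of_even_iff {α : Type*} [DecidableEq α] {A B : Finset α}
    (hBA : B ⊆ A) (hpar : Even #A ↔ Even #B) {x : α} (hx : x ∈ A \ B) :
    ∃ y ∈ A \ B, y ≠ x := by
  have heven : Even #(A \ B) := by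
    rw [Finset.card_sdiff_of_subset hBA, Nat.even_sub (Finset.card_le_card hBA)]
    exact hpar
  have hpos : 0 < #(A \ B) := Finset.card_pos.2 ⟨x, hx⟩
  obtain ⟨k, hk⟩ := heven
  exact Finset.exists_mem_ne (by omega) x

namespace DFSTree

def Comparable (t : DFSTree V E) (a b : V) : Prop := t.Anc a b ∨ t.Anc b a

variable {t : DFSTree V E}

theorem anc_refl (a : V) : t.Anc a a := .refl

theorem Anc.trans {a b c : V} (hab : t.Anc a b) (hbc : t.Anc b c) : t.Anc a c :=
  Relation.ReflTransGen.trans hbc hab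

theorem anc_parent {z : V} (hz : z ≠ t.root) : t.Anc (t.parent z) z := .single ⟨hz, rfl⟩

theorem anc_iff_eq_or_anc_parent {x z : V} (hz : z ≠ t.root) :
    t.Anc x z ↔ x = z ∨ t.Anc x (t.parent z) := by
  refine ⟨fun h => ?_, ?_⟩
  · rcases Relation.ReflTransGen.cases_head h with h | ⟨c, ⟨-, rfl⟩, h⟩
    exacts [.inl h.symm, .inr h]
  · rintro (rfl | h)
    exacts [anc_refl x, h.trans (anc_parent hz)]

theorem eq_root_of_anc_root {a : V} (h : t.Anc a t.root) : a = t.root := by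
  rcases Relation.ReflTransGen.cases_head h with h | ⟨c, ⟨hr, -⟩, -⟩
  exacts [h.symm, absurd rfl hr]

theorem Anc.comparable {a b c : V} (hac : t.Anc a c) (hbc : t.Anc b c) : t.Comparable a b :=
  (Relation.ReflTransGen.total_of_right_unique
    (fun _ _ _ h h' => h.2.trans h'.2.symm) hac hbc).symm

theorem Anc.antisymm (ht : t.IsDFS) {a b : V} (hab : t.Anc a b) (hba : t.Anc b a) : a = b :=
  ht.pre_inj (le_antisymm (ht.pre_mono _ _ hab) (ht.pre_mono _ _ hba))

theorem anc_of_pre_lt (ht : t.IsDFS) {a b : V} (hab : t.pre a < t.pre b)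
    (h : t.Comparable a b) : t.Anc a b :=
  h.resolve_right fun hba => (ht.pre_mono _ _ hba).not_gt hab

theorem Comparable.anc_of_anc (ht : t.IsDFS) {u v w : V} (huv : t.Comparable u v)
    (hwv : t.Anc w v) (hwu : t.pre w < t.pre u) : t.Anc w u := by
  rcases huv with huv | hvu
  exacts [anc_of_pre_lt ht hwu (hwv.comparable huv), hwv.trans hvu]

theorem eq_treeEdge_or_mem_B_of_crossing (ht : t.IsDFS) {a p q : V} {e : E}
    (hor : t.ends e = (p, q) ∨ t.ends e = (q, p)) (hp : t.Anc a p) (hq : ¬ t.Anc a q) :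
    (a ≠ t.root ∧ e = t.treeEdge a) ∨ e ∈ t.B a := by
  by_cases htree : t.IsTreeEdge e
  · obtain ⟨m, hm, rfl⟩ := htree
    rcases hor with h | h <;> rw [ht.tree_ends m hm, Prod.mk.injEq] at h <;>
      obtain ⟨rfl, rfl⟩ := h
    · rcases (anc_iff_eq_or_anc_parent hm).1 hp with rfl | h
      exacts [.inl ⟨hm, rfl⟩, absurd h hq]
    · exact absurd (hp.trans (anc_parent hm)) hq
  · have hback := ht.back e htree
    rcases hor with h | h <;> rw [h] at hback
    · refine .inr ⟨htree, by rwa [h], ?_, ?_⟩ <;> rw [h]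
      · exact (hp.comparable hback).resolve_left hq
      · rintro rfl
        exact hq (anc_refl _)
    · exact absurd (hp.trans hback) hq

theorem root_anc (ht : t.IsDFS) (z : V) : t.Anc t.root z := by
  by_contra hz
  obtain ⟨e, p, q, -, hor, hp, hq⟩ :=
    (ht.conn t.root z).exists_crossing (D := {x | t.Anc t.root x}) (anc_refl _) hz
  rcases eq_treeEdge_or_mem_B_of_crossing ht hor hp hq with ⟨hr, -⟩ | ⟨-, -, hanc, hne⟩
  exacts [hr rfl, hne (eq_root_of_anc_root hanc)]

theorem parent_ne (ht : t.IsDFS) {z : V} (hz : z ≠ t.root) : t.parent z ≠ z := by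
  intro hpz
  have hfix : ∀ a, t.Anc a z → a = z := by
    intro a ha
    induction ha with
    | refl => rfl
    | tail _ hstep ih => rw [hstep.2, ih, hpz]
  exact hz (hfix _ (root_anc ht z)).symm

theorem not_anc_parent (ht : t.IsDFS) {z : V} (hz : z ≠ t.root) : ¬ t.Anc z (t.parent z) :=
  fun h => parent_ne ht hz ((anc_parent hz).antisymm ht h)

theorem exists_mem_B (ht : t.IsDFS) (h2 : GraphKConn t.ends 2) {x : V} (hx : x ≠ t.root) :
    ∃ e, e ∈ t.B x := by
  have hreach : Reach t.ends {t.treeEdge x} x t.root := by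
    simpa using h2 {t.treeEdge x} (by simp) x t.root
  obtain ⟨e, p, q, he, hor, hp, hq⟩ := hreach.exists_crossing (D := {z | t.Anc x z})
    (anc_refl x) fun h => hx (eq_root_of_anc_root h)
  rcases eq_treeEdge_or_mem_B_of_crossing ht hor hp hq with ⟨-, rfl⟩ | hB
  exacts [absurd rfl he, ⟨e, hB⟩]

open Classical in
theorem card_filter_anc (ht : t.IsDFS) (X : Finset V) {z : V} (hz : z ≠ t.root) :
    #{x ∈ X | t.Anc x z} = #{x ∈ X | t.Anc x (t.parent z)} + if z ∈ X then 1 else 0 := by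
  have hdisj : Disjoint {x ∈ X | x = z} {x ∈ X | t.Anc x (t.parent z)} :=
    Finset.disjoint_filter.2 fun _ _ hx h => not_anc_parent ht hz (hx ▸ h)
  rw [Finset.filter_congr fun x _ => anc_iff_eq_or_anc_parent hz, Finset.filter_or,
    Finset.card_union_of_disjoint hdisj, add_comm]
  congr 1
  split_ifs with hzX
  · refine Finset.card_eq_one.2 ⟨z, Finset.ext fun x => ?_⟩
    simp only [Finset.mem_filter, Finset.mem_singleton]
    exact ⟨And.right, fun h => ⟨h ▸ hzX, h⟩⟩
  · simp [hzX]

open Classical in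
theorem reach_root_iff_even (ht : t.IsDFS) {X : Finset V} (hX : ∀ x ∈ X, x ≠ t.root)
    (hcut : IsMinimalCut t.ends ↑(X.image t.treeEdge)) (z : V) :
    Reach t.ends ↑(X.image t.treeEdge) t.root z ↔ Even #{x ∈ X | t.Anc x z} := by
  have hz : Relation.ReflTransGen _ z t.root := root_anc ht z
  induction hz using Relation.ReflTransGen.head_induction_on with
  | refl =>
    have hempty : {x ∈ X | t.Anc x t.root} = ∅ :=
      Finset.filter_false_of_mem fun x hx h => hX x hx (eq_root_of_anc_root h)
    simp only [hempty, Finset.card_empty, Nat.even_iff, Nat.zero_mod, iff_true]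
    exact .refl
  | @head z _ hstep _ ih =>
    obtain ⟨hz, rfl⟩ := hstep
    rw [card_filter_anc ht X hz]
    by_cases hzX : z ∈ X
    · rw [if_pos hzX, Nat.even_add_one]
      exact (hcut.reach_iff_not_reach (Finset.mem_image_of_mem _ hzX) (ht.tree_ends z hz)
        t.root).trans (not_congr ih)
    · rw [if_neg hzX, add_zero]
      have hnot : t.treeEdge z ∉ (↑(X.image t.treeEdge) : Set E) := by
        simp only [Finset.coe_image, Set.mem_image, Finset.mem_coe, not_exists, not_and]
        exact fun x hx hxz => hzX (ht.treeEdge_inj x z (hX x hx) hz hxz ▸ hx)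
      exact (reach_iff_of_notMem hnot (ht.tree_ends z hz)).trans ih

open Classical in
theorem exists_comparable (ht : t.IsDFS) (h2 : GraphKConn t.ends 2) {X : Finset V}
    (hX : ∀ x ∈ X, x ≠ t.root) (hcut : IsMinimalCut t.ends ↑(X.image t.treeEdge)) {x : V}
    (hx : x ∈ X) : ∃ y ∈ X, y ≠ x ∧ t.Comparable x y := by
  obtain ⟨e, hnt, hxd, hyx, hyne⟩ := exists_mem_B ht h2 (hX x hx)
  have heS : e ∉ (↑(X.image t.treeEdge) : Set E) := by
    simp only [Finset.coe_image, Set.mem_image, Finset.mem_coe, not_exists, not_and]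
    exact fun x' hx' h => hnt ⟨x', hX x' hx', h.symm⟩
  have hpar : Even #{x ∈ X | t.Anc x (t.ends e).1} ↔ Even #{x ∈ X | t.Anc x (t.ends e).2} := by
    rw [← reach_root_iff_even ht hX hcut, ← reach_root_iff_even ht hX hcut]
    exact reach_iff_of_notMem heS rfl
  have hsub : {x ∈ X | t.Anc x (t.ends e).2} ⊆ {x ∈ X | t.Anc x (t.ends e).1} :=
    Finset.monotone_filter_right _ fun _ _ h => h.trans (hyx.trans hxd)
  have hxmem : x ∈ {x ∈ X | t.Anc x (t.ends e).1} \ {x ∈ X | t.Anc x (t.ends e).2} := by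
    simp only [Finset.mem_sdiff, Finset.mem_filter, not_and]
    exact ⟨⟨hx, hxd⟩, fun _ h => hyne (hyx.antisymm ht h)⟩
  obtain ⟨y, hy, hyx'⟩ := Finset.exists_ne_mem_sdiff_of_even_iff hsub hpar hxmem
  simp only [Finset.mem_sdiff, Finset.mem_filter] at hy
  exact ⟨y, hy.1.1, hyx', hxd.comparable hy.1.2⟩

theorem anc_of_partner [DecidableEq V] (ht : t.IsDFS) {a b w : V} (hwa : t.pre w < t.pre a)
    (hwb : t.Anc w b)
    (h : ∃ y ∈ ({a, b, w} : Finset V), y ≠ a ∧ t.Comparable a y) : t.Anc w a := by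
  obtain ⟨y, hy, hya, hay⟩ := h
  simp only [Finset.mem_insert, Finset.mem_singleton] at hy
  rcases hy with rfl | rfl | rfl
  exacts [absurd rfl hya, hay.anc_of_anc ht hwb hwa, anc_of_pre_lt ht hwa hay.symm]

end DFSTree

open DFSTree in
theorem smallest_is_common_ancestor_general (t : DFSTree V E) (ht : t.IsDFS)
    (h3 : GraphKConn t.ends 3) (u v w : V)
    (hu : u ≠ t.root) (hv : v ≠ t.root) (hw : w ≠ t.root)
    (hcut : IsCutSet t.ends {t.treeEdge u, t.treeEdge v, t.treeEdge w})
    (hwu : t.pre w < t.pre u) (hwv : t.pre w < t.pre v) :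
    t.Anc w u ∧ t.Anc w v := by
  classical
  have hX : ∀ x ∈ ({u, v, w} : Finset V), x ≠ t.root := by simp [hu, hv, hw]
  have hmin : IsMinimalCut t.ends ↑(({u, v, w} : Finset V).image t.treeEdge) :=
    h3.isMinimalCut (Finset.card_image_le.trans Finset.card_le_three) (by simpa using hcut)
  have partner := fun x hx => exists_comparable ht (h3.mono (by norm_num)) hX hmin (x := x) hx
  obtain ⟨y, hy, hyw, hwy⟩ := partner w (by simp)
  simp only [Finset.mem_insert, Finset.mem_singleton] at hy
  rcases hy with rfl | rfl | rfl
  · have hanc := anc_of_pre_lt ht hwu hwy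
    refine ⟨hanc, anc_of_partner ht hwv hanc ?_⟩
    rw [Finset.insert_comm]
    exact partner v (by simp)
  · have hanc := anc_of_pre_lt ht hwv hwy
    exact ⟨anc_of_partner ht hwu hanc (partner u (by simp)), hanc⟩
  · exact absurd rfl hyw

/-- If `{(u, p(u)), (v, p(v)), (w, p(w))}` is a 3-edge cut of a 3-edge-connected
graph and `w` has the smallest preorder number among `u, v, w`, then `w` is an
ancestor of both `u` and `v`. -/
theorem smallest_is_common_ancestor (t : DFSTree V E) (ht : t.IsDFS)
    (h3 : GraphKConn t.ends 3) (u v w : V)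
    (hu : u ≠ t.root) (hv : v ≠ t.root) (hw : w ≠ t.root)
    (huv : u ≠ v) (huw : u ≠ w) (hvw : v ≠ w)
    (hcut : IsCutSet t.ends {t.treeEdge u, t.treeEdge v, t.treeEdge w})
    (hwu : t.pre w < t.pre u) (hwv : t.pre w < t.pre v) :
    t.Anc w u ∧ t.Anc w v :=
  smallest_is_common_ancestor_general t ht h3 u v w hu hv hw hcut hwu hwv
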